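/- arXiv:2401.17980 — 5 statements merged into one kernel-verified Lean document; each statement's English description precedes it below -/
import Mathlib

section
/- For any finite collection of nonnegative real numbers arranged in n subsets each of size r, say a_{i,k} ≥ 0 for i ∈ {1,...,r} and k ∈ {1,...,n}, the minimum over k of the subset sums is at most the sum over all n-tuples (i_1,...,i_n) of the minimum of the selected elements: min_k (Σ_{i=1}^r a_{i,k}) ≤ Σ_{i_1,...,i_n=1}^r min(a_{i_1,1}, a_{i_2,2}, ..., a_{i_n,n}). -/
/-- For nonnegative reals `a i k` (i ∈ Fin r, k ∈ Fin n),
the minimum over `k` of the column sums is at most the sum over all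
selections `f : Fin n → Fin r` of the minimum of the selected entries. -/
theorem min_sum_le_sum_min (r n : ℕ) [NeZero r] [NeZero n]
    (a : Fin r → Fin n → ℝ) (ha : ∀ i k, 0 ≤ a i k) :
    (⨅ k : Fin n, ∑ i : Fin r, a i k) ≤
      ∑ f : Fin n → Fin r, ⨅ k : Fin n, a (f k) k := by
  -- maximum of each column
  have hm : ∀ k : Fin n, ∃ m : Fin r, ∀ i, a i k ≤ a m k := by
    intro k
    obtain ⟨m, -, hm⟩ := Finset.exists_max_image Finset.univ (fun i => a i k)
      ⟨Classical.arbitrary _, Finset.mem_univ _⟩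
    exact ⟨m, fun i => hm i (Finset.mem_univ _)⟩
  choose m hmmax using hm
  -- column minimizing the column maximum
  obtain ⟨j, -, hj⟩ := Finset.exists_min_image Finset.univ (fun k => a (m k) k)
    ⟨Classical.arbitrary _, Finset.mem_univ _⟩
  replace hj : ∀ k, a (m j) j ≤ a (m k) k := fun k => hj k (Finset.mem_univ _)
  set F : Fin r → (Fin n → Fin r) := fun i k => if k = j then i else m k with hF
  have hFinj : Function.Injective F := by
    intro i i' h
    have := congrFun h j
    simpa [hF] using this
  have hval : ∀ i : Fin r, (⨅ k : Fin n, a (F i k) k) = a i j := by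
    intro i
    apply le_antisymm
    · have := ciInf_le (Set.finite_range (fun k => a (F i k) k)).bddBelow j
      simpa [hF] using this
    · refine le_ciInf fun k => ?_
      by_cases hk : k = j
      · simp [hF, hk]
      · simp only [hF, if_neg hk]
        exact le_trans (le_trans (hmmax j i) (hj k)) le_rfl
  have h1 : (⨅ k : Fin n, ∑ i : Fin r, a i k) ≤ ∑ i : Fin r, a i j :=
    ciInf_le (Set.finite_range _).bddBelow j
  refine h1.trans ?_
  calc ∑ i : Fin r, a i j = ∑ i : Fin r, ⨅ k : Fin n, a (F i k) k := by
        exact Finset.sum_congr rfl fun i _ => (hval i).symm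
    _ = ∑ f ∈ Finset.univ.image F, ⨅ k : Fin n, a (f k) k := by
        rw [Finset.sum_image (fun x _ y _ h => hFinj h)]
    _ ≤ ∑ f : Fin n → Fin r, ⨅ k : Fin n, a (f k) k := by
        apply Finset.sum_le_sum_of_subset_of_nonneg (Finset.subset_univ _)
        intro f _ _
        exact le_ciInf fun k => ha _ _
end

section
/- For any finite set of nonnegative real numbers a_1,...,a_n, their sum is bounded by the maximum plus half the sum of pairwise minima: Σ_i a_i ≤ max(a_1,...,a_n) + (1/2) Σ_{i,j} min(a_i, a_j), where the double sum ranges over all ordered pairs (i,j) with i ≠ j (equivalently, over all pairs counted twice). -/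
/-- For nonnegative reals `a 1, …, a n` (n ≥ 1), the sum is at most
the maximum plus half the sum of pairwise minima over all ordered pairs `i ≠ j`. -/
theorem sum_le_max_add_half_sum_min (n : ℕ) [NeZero n]
    (a : Fin n → ℝ) (ha : ∀ i, 0 ≤ a i) :
    ∑ i : Fin n, a i ≤
      (⨆ i : Fin n, a i) +
        (1 / 2) * ∑ p ∈ Finset.univ.offDiag, min (a p.1) (a (p.2 : Fin n)) := by
  obtain ⟨k, hk⟩ := Finite.exists_max a
  have hk' : a k ≤ ⨆ i, a i := le_ciSup (Set.Finite.bddAbove (Set.finite_range a)) k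
  set E := Finset.univ.erase k with hE
  have hsplit : ∑ i : Fin n, a i = a k + ∑ i ∈ E, a i :=
    (Finset.add_sum_erase _ _ (Finset.mem_univ k)).symm
  have hmin : ∀ i ∈ E, a i = min (a i) (a k) := fun i _ => (min_eq_left (hk i)).symm
  set T1 := E.image (fun i => ((i, k) : Fin n × Fin n)) with hT1
  set T2 := E.image (fun i => ((k, i) : Fin n × Fin n)) with hT2
  have hdisj : Disjoint T1 T2 := by
    rw [Finset.disjoint_left]
    rintro ⟨x, y⟩ h1 h2
    simp only [hT1, hT2, Finset.mem_image, Prod.mk.injEq] at h1 h2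
    obtain ⟨i, hi, rfl, rfl⟩ := h1
    obtain ⟨j, hj, h, _⟩ := h2
    exact Finset.ne_of_mem_erase hi h.symm
  have hsub : T1 ∪ T2 ⊆ Finset.univ.offDiag := by
    rintro ⟨x, y⟩ h
    simp only [Finset.mem_union, hT1, hT2, Finset.mem_image,
      Prod.mk.injEq] at h
    rcases h with ⟨i, hi, rfl, rfl⟩ | ⟨i, hi, rfl, rfl⟩ <;>
      simp [Finset.mem_offDiag, Finset.ne_of_mem_erase hi,
        (Finset.ne_of_mem_erase hi).symm]
  have hinj1 : Set.InjOn (fun i => ((i, k) : Fin n × Fin n)) E := by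
    intro x _ y _ h; exact (Prod.mk.injEq ..).mp h |>.1
  have hinj2 : Set.InjOn (fun i => ((k, i) : Fin n × Fin n)) E := by
    intro x _ y _ h; exact (Prod.mk.injEq ..).mp h |>.2
  have hbound : ∑ p ∈ T1 ∪ T2, min (a p.1) (a p.2) ≤
      ∑ p ∈ Finset.univ.offDiag, min (a p.1) (a p.2) := by
    apply Finset.sum_le_sum_of_subset_of_nonneg hsub
    intro p _ _; exact le_min (ha _) (ha _)
  rw [Finset.sum_union hdisj, Finset.sum_image hinj1, Finset.sum_image hinj2] at hbound
  have heq : ∑ i ∈ E, min (a k) (a i) = ∑ i ∈ E, min (a i) (a k) := by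
    simp [min_comm]
  rw [heq] at hbound
  have h2 : ∑ i ∈ E, a i ≤ (1 / 2) * ∑ p ∈ Finset.univ.offDiag, min (a p.1) (a p.2) := by
    have : ∑ i ∈ E, a i = ∑ i ∈ E, min (a i) (a k) := Finset.sum_congr rfl hmin
    linarith
  linarith [hsplit]
end

section
/- Three pure qubit states represented by unit Bloch vectors lying in a common plane through the origin (a great circle), with pairwise angles ν = angle(v₁,v₂), ν' = angle(v₁,v₃), ν'' = angle(v₂,v₃) satisfying ν+ν' ≥ π, ν+ν'' ≥ π, ν'+ν'' ≥ π, cannot all lie in a common open half-plane; equivalently, there exist nonnegative reals γ₁, γ₂, γ₃ with γ₁+γ₂+γ₃ = 2 and γ₁(-v₁) + γ₂(-v₂) + γ₃(-v₃) = 0. -/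
open scoped RealInnerProductSpace

private lemma arccos_add_ge_pi {a b : ℝ} (ha : |a| ≤ 1) (hb : |b| ≤ 1)
    (h : Real.arccos a + Real.arccos b ≥ Real.pi) : a + b ≤ 0 := by
  obtain ⟨ha1, ha2⟩ := abs_le.mp ha
  obtain ⟨hb1, hb2⟩ := abs_le.mp hb
  have h1 : Real.arccos (-a) ≤ Real.arccos b := by
    rw [Real.arccos_neg]; linarith
  have h2 := Real.cos_le_cos_of_nonneg_of_le_pi (Real.arccos_nonneg (-a))
    (Real.arccos_le_pi b) h1
  rw [Real.cos_arccos hb1 hb2, Real.cos_arccos (by linarith) (by linarith)] at h2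
  linarith

/-- Three unit vectors in the plane whose pairwise angles satisfy
ν+ν' ≥ π, ν+ν'' ≥ π, ν'+ν'' ≥ π admit nonnegative coefficients γ₁,γ₂,γ₃ with
γ₁+γ₂+γ₃ = 2 and γ₁(−v₁)+γ₂(−v₂)+γ₃(−v₃) = 0 (an anti-distinguishing POVM). -/
theorem exists_antidistinguishing_povm
    (v₁ v₂ v₃ : EuclideanSpace ℝ (Fin 2))
    (h₁ : ‖v₁‖ = 1) (h₂ : ‖v₂‖ = 1) (h₃ : ‖v₃‖ = 1)
    (h12 : InnerProductGeometry.angle v₁ v₂ + InnerProductGeometry.angle v₁ v₃ ≥ Real.pi)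
    (h13 : InnerProductGeometry.angle v₁ v₂ + InnerProductGeometry.angle v₂ v₃ ≥ Real.pi)
    (h23 : InnerProductGeometry.angle v₁ v₃ + InnerProductGeometry.angle v₂ v₃ ≥ Real.pi) :
    ∃ γ₁ γ₂ γ₃ : ℝ, 0 ≤ γ₁ ∧ 0 ≤ γ₂ ∧ 0 ≤ γ₃ ∧ γ₁ + γ₂ + γ₃ = 2 ∧
      γ₁ • (-v₁) + γ₂ • (-v₂) + γ₃ • (-v₃) = 0 := by
  set a : ℝ := ⟪v₁, v₂⟫ with hadef
  set b : ℝ := ⟪v₁, v₃⟫ with hbdef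
  set c : ℝ := ⟪v₂, v₃⟫ with hcdef
  have haabs : |a| ≤ 1 := by
    have := abs_real_inner_le_norm v₁ v₂; rwa [h₁, h₂, one_mul] at this
  have hbabs : |b| ≤ 1 := by
    have := abs_real_inner_le_norm v₁ v₃; rwa [h₁, h₃, one_mul] at this
  have hcabs : |c| ≤ 1 := by
    have := abs_real_inner_le_norm v₂ v₃; rwa [h₂, h₃, one_mul] at this
  have hang12 : InnerProductGeometry.angle v₁ v₂ = Real.arccos a := by
    show Real.arccos (⟪v₁, v₂⟫ / (‖v₁‖ * ‖v₂‖)) = _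
    rw [h₁, h₂, one_mul, div_one]
  have hang13 : InnerProductGeometry.angle v₁ v₃ = Real.arccos b := by
    show Real.arccos (⟪v₁, v₃⟫ / (‖v₁‖ * ‖v₃‖)) = _
    rw [h₁, h₃, one_mul, div_one]
  have hang23 : InnerProductGeometry.angle v₂ v₃ = Real.arccos c := by
    show Real.arccos (⟪v₂, v₃⟫ / (‖v₂‖ * ‖v₃‖)) = _
    rw [h₂, h₃, one_mul, div_one]
  have hab : a + b ≤ 0 := arccos_add_ge_pi haabs hbabs (by rw [hang12, hang13] at h12; exact h12)
  have hac : a + c ≤ 0 := arccos_add_ge_pi haabs hcabs (by rw [hang12, hang23] at h13; exact h13)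
  have hbc : b + c ≤ 0 := arccos_add_ge_pi hbabs hcabs (by rw [hang13, hang23] at h23; exact h23)
  obtain ⟨ha1, ha2⟩ := abs_le.mp haabs
  obtain ⟨hb1, hb2⟩ := abs_le.mp hbabs
  obtain ⟨hc1, hc2⟩ := abs_le.mp hcabs
  have hvv1 : ⟪v₁, v₁⟫ = (1:ℝ) := by rw [real_inner_self_eq_norm_sq, h₁]; norm_num
  have hvv2 : ⟪v₂, v₂⟫ = (1:ℝ) := by rw [real_inner_self_eq_norm_sq, h₂]; norm_num
  have hvv3 : ⟪v₃, v₃⟫ = (1:ℝ) := by rw [real_inner_self_eq_norm_sq, h₃]; norm_num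
  have hba : ⟪v₂, v₁⟫ = a := (real_inner_comm v₂ v₁).symm
  have hca : ⟪v₃, v₁⟫ = b := (real_inner_comm v₃ v₁).symm
  have hcb : ⟪v₃, v₂⟫ = c := (real_inner_comm v₃ v₂).symm
  -- three vectors in ℝ² are linearly dependent
  have hdep : ¬ LinearIndependent ℝ ![v₁, v₂, v₃] := by
    intro h
    have := h.fintype_card_le_finrank
    rw [finrank_euclideanSpace_fin] at this
    simp at this
  obtain ⟨g, hg, i, hi⟩ := Fintype.not_linearIndependent_iff.mp hdep
  rw [Fin.sum_univ_three] at hg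
  simp only [Matrix.cons_val_zero, Matrix.cons_val_one, Matrix.head_cons,
    Matrix.cons_val_two, Matrix.tail_cons] at hg
  have e1 : g 0 + g 1 * a + g 2 * b = 0 := by
    have h := congrArg (fun w => (⟪v₁, w⟫ : ℝ)) hg
    simp only [inner_add_right, real_inner_smul_right, inner_zero_right, hvv1] at h
    rw [← hadef, ← hbdef] at h
    linarith
  have e2 : g 0 * a + g 1 + g 2 * c = 0 := by
    have h := congrArg (fun w => (⟪v₂, w⟫ : ℝ)) hg
    simp only [inner_add_right, real_inner_smul_right, inner_zero_right, hvv2, hba] at h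
    rw [← hcdef] at h
    linarith
  have e3 : g 0 * b + g 1 * c + g 2 = 0 := by
    have h := congrArg (fun w => (⟪v₃, w⟫ : ℝ)) hg
    simp only [inner_add_right, real_inner_smul_right, inner_zero_right, hvv3, hca, hcb] at h
    linarith
  -- Gram determinant vanishes
  have hD : 1 + 2*a*b*c - a^2 - b^2 - c^2 = 0 := by
    have k0 : (1 + 2*a*b*c - a^2 - b^2 - c^2) * g 0 = 0 := by
      linear_combination (1 - c^2) * e1 + (b*c - a) * e2 + (a*c - b) * e3
    have k1 : (1 + 2*a*b*c - a^2 - b^2 - c^2) * g 1 = 0 := by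
      linear_combination (b*c - a) * e1 + (1 - b^2) * e2 + (a*b - c) * e3
    have k2 : (1 + 2*a*b*c - a^2 - b^2 - c^2) * g 2 = 0 := by
      linear_combination (a*c - b) * e1 + (a*b - c) * e2 + (1 - a^2) * e3
    fin_cases i
    · exact (mul_eq_zero.mp k0).resolve_right hi
    · exact (mul_eq_zero.mp k1).resolve_right hi
    · exact (mul_eq_zero.mp k2).resolve_right hi
  -- kernel vector with nonnegative entries
  set x₁ : ℝ := (1 - c) * (1 + c - a - b) with hx1def
  set x₂ : ℝ := (1 - b) * (1 + b - a - c) with hx2def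
  set x₃ : ℝ := (1 - a) * (1 + a - b - c) with hx3def
  have hx1 : 0 ≤ x₁ := mul_nonneg (by linarith) (by linarith)
  have hx2 : 0 ≤ x₂ := mul_nonneg (by linarith) (by linarith)
  have hx3 : 0 ≤ x₃ := mul_nonneg (by linarith) (by linarith)
  rcases eq_or_lt_of_le (by linarith : (0:ℝ) ≤ x₁ + x₂ + x₃) with hs | hs
  · -- degenerate case: all xᵢ = 0
    have z1 : x₁ = 0 := by linarith
    have z2 : x₂ = 0 := by linarith
    have z3 : x₃ = 0 := by linarith
    have hneg : ∀ u w : EuclideanSpace ℝ (Fin 2), ⟪u, w⟫ = (-1:ℝ) → ⟪u,u⟫ = (1:ℝ) →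
        ⟪w,w⟫ = (1:ℝ) → w = -u := by
      intro u w huw huu hww
      have hwu : ⟪w, u⟫ = (-1:ℝ) := by
        rw [← huw]; exact (real_inner_comm w u).symm
      have : ⟪u + w, u + w⟫ = (0:ℝ) := by
        rw [inner_add_left, inner_add_right, inner_add_right, huu, hww, huw, hwu]
        ring
      have h0 : u + w = 0 := inner_self_eq_zero.mp this
      exact eq_neg_of_add_eq_zero_right h0
    have hcase : (b = -1 ∧ c = -1) ∨ (a = -1 ∧ b = -1) ∨ (a = -1 ∧ c = -1) := by
      rcases mul_eq_zero.mp z3 with h | h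
      · -- a = 1
        have haa : a = 1 := by linarith
        exact Or.inl ⟨by linarith, by linarith⟩
      · -- 1 + a = b + c, so a = -1 and b + c = 0
        have haa : a = -1 := by linarith
        have hbcz : b + c = 0 := by linarith
        rcases mul_eq_zero.mp z2 with h' | h'
        · exact Or.inr (Or.inr ⟨haa, by linarith⟩)
        · exact Or.inr (Or.inl ⟨haa, by linarith⟩)
    rcases hcase with ⟨hb', hc'⟩ | ⟨ha', hb'⟩ | ⟨ha', hc'⟩
    · -- v₃ = -v₁, v₃ = -v₂
      have hv3 : v₃ = -v₁ := hneg v₁ v₃ hb' hvv1 hvv3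
      have hv3' : v₃ = -v₂ := hneg v₂ v₃ hc' hvv2 hvv3
      refine ⟨1/2, 1/2, 1, by norm_num, by norm_num, by norm_num, by norm_num, ?_⟩
      have hv2 : v₂ = -v₃ := by rw [hv3']; simp
      rw [hv3, hv2, hv3]
      module
    · -- v₂ = -v₁, v₃ = -v₁
      have hv2 : v₂ = -v₁ := hneg v₁ v₂ ha' hvv1 hvv2
      have hv3 : v₃ = -v₁ := hneg v₁ v₃ hb' hvv1 hvv3
      refine ⟨1, 1/2, 1/2, by norm_num, by norm_num, by norm_num, by norm_num, ?_⟩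
      rw [hv2, hv3]
      module
    · -- v₂ = -v₁, v₃ = -v₂
      have hv2 : v₂ = -v₁ := hneg v₁ v₂ ha' hvv1 hvv2
      have hv3 : v₃ = -v₂ := hneg v₂ v₃ hc' hvv2 hvv3
      refine ⟨1/2, 1, 1/2, by norm_num, by norm_num, by norm_num, by norm_num, ?_⟩
      rw [hv3, hv2]
      module
  · -- main case: s > 0, normalize the kernel vector
    set s : ℝ := x₁ + x₂ + x₃ with hsdef
    have hw : (x₁ • v₁ + x₂ • v₂ + x₃ • v₃ : EuclideanSpace ℝ (Fin 2)) = 0 := by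
      rw [← inner_self_eq_zero (𝕜 := ℝ)]
      simp only [inner_add_left, inner_add_right, real_inner_smul_left,
        real_inner_smul_right, hvv1, hvv2, hvv3, hba, hca, hcb]
      rw [hx1def, hx2def, hx3def]
      linear_combination (((1 - c) * (1 + c - a - b)) + ((1 - b) * (1 + b - a - c))
        + ((1 - a) * (1 + a - b - c))) * hD
    have hs0 : s ≠ 0 := ne_of_gt hs
    refine ⟨2 / s * x₁, 2 / s * x₂, 2 / s * x₃,
      mul_nonneg (by positivity) hx1,
      mul_nonneg (by positivity) hx2,
      mul_nonneg (by positivity) hx3, ?_, ?_⟩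
    · have hsx : x₁ + x₂ + x₃ = s := rfl
      field_simp
      linarith
    · have key : (2 / s * x₁) • (-v₁) + (2 / s * x₂) • (-v₂) + (2 / s * x₃) • (-v₃)
          = (-(2/s)) • (x₁ • v₁ + x₂ • v₂ + x₃ • v₃) := by
        module
      rw [key, hw, smul_zero]
end

section
/- For two orthonormal bases of ℂ², each defining the maximally mixed state ρ = I/2, the epistemic overlap decomposes exactly as ω_E(ρ₁,ρ₂) = (1/2) Σ_{i,j=1}^{2} ω_E(ψ_{i},φ_{j}), where ω_E of two epistemic states is ∫ min(μ₁(λ),μ₂(λ)) dλ, provided each pair of orthogonal states has disjoint epistemic supports. -/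
open MeasureTheory

/-- Pointwise decomposition of min under disjointness. -/
lemma min_add_decomp (a0 a1 b0 b1 : ℝ) (ha0 : 0 ≤ a0) (ha1 : 0 ≤ a1)
    (hb0 : 0 ≤ b0) (hb1 : 0 ≤ b1) (ha : min a0 a1 = 0) (hb : min b0 b1 = 0) :
    min (a0 + a1) (b0 + b1) =
      min a0 b0 + min a0 b1 + min a1 b0 + min a1 b1 := by
  rcases min_eq_iff.mp ha with ⟨h, _⟩ | ⟨h, _⟩ <;>
    rcases min_eq_iff.mp hb with ⟨h', _⟩ | ⟨h', _⟩ <;>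
      subst h <;> subst h' <;>
        simp [min_eq_left, min_eq_right, ha0, ha1, hb0, hb1]

/-- For two orthonormal bases of ℂ² (each yielding the maximally
mixed state), with epistemic densities having disjoint supports within each
basis, the epistemic overlap of the two mixed preparations decomposes exactly
into the average of the four pure-pair overlaps. -/
theorem epistemic_overlap_decomposition
    {Λ : Type*} [MeasureSpace Λ]
    (μψ μφ : Fin 2 → Λ → ℝ)
    (hψnn : ∀ i x, 0 ≤ μψ i x) (hφnn : ∀ j x, 0 ≤ μφ j x)
    (hψint : ∀ i, Integrable (μψ i)) (hφint : ∀ j, Integrable (μφ j))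
    (hψdisj : ∀ x, min (μψ 0 x) (μψ 1 x) = 0)
    (hφdisj : ∀ x, min (μφ 0 x) (μφ 1 x) = 0) :
    ∫ x, min ((1 / 2) * (μψ 0 x + μψ 1 x)) ((1 / 2) * (μφ 0 x + μφ 1 x)) =
      (1 / 2) * ∑ i : Fin 2, ∑ j : Fin 2, ∫ x, min (μψ i x) (μφ j x) := by
  have hmin : ∀ i j, Integrable (fun x => min (μψ i x) (μφ j x)) := by
    intro i j
    exact (hψint i).inf (hφint j)
  have key : ∀ x, min ((1 / 2) * (μψ 0 x + μψ 1 x)) ((1 / 2) * (μφ 0 x + μφ 1 x))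
      = (1 / 2) * (min (μψ 0 x) (μφ 0 x) + min (μψ 0 x) (μφ 1 x)
          + min (μψ 1 x) (μφ 0 x) + min (μψ 1 x) (μφ 1 x)) := by
    intro x
    rw [← mul_min_of_nonneg _ _ (by norm_num : (0:ℝ) ≤ 1/2),
      min_add_decomp _ _ _ _ (hψnn 0 x) (hψnn 1 x) (hφnn 0 x) (hφnn 1 x)
        (hψdisj x) (hφdisj x)]
  simp only [key]
  rw [MeasureTheory.integral_const_mul]
  congr 1
  rw [Fin.sum_univ_two, Fin.sum_univ_two, Fin.sum_univ_two]
  have h1 : ∫ x, (min (μψ 0 x) (μφ 0 x) + min (μψ 0 x) (μφ 1 x)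
      + min (μψ 1 x) (μφ 0 x) + min (μψ 1 x) (μφ 1 x))
      = (∫ x, min (μψ 0 x) (μφ 0 x) + min (μψ 0 x) (μφ 1 x)
        + min (μψ 1 x) (μφ 0 x)) + ∫ x, min (μψ 1 x) (μφ 1 x) :=
    integral_add (((hmin 0 0).add (hmin 0 1)).add (hmin 1 0)) (hmin 1 1)
  have h2 : ∫ x, (min (μψ 0 x) (μφ 0 x) + min (μψ 0 x) (μφ 1 x)
      + min (μψ 1 x) (μφ 0 x))
      = (∫ x, min (μψ 0 x) (μφ 0 x) + min (μψ 0 x) (μφ 1 x))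
        + ∫ x, min (μψ 1 x) (μφ 0 x) :=
    integral_add ((hmin 0 0).add (hmin 0 1)) (hmin 1 0)
  have h3 : ∫ x, (min (μψ 0 x) (μφ 0 x) + min (μψ 0 x) (μφ 1 x))
      = (∫ x, min (μψ 0 x) (μφ 0 x)) + ∫ x, min (μψ 0 x) (μφ 1 x) :=
    integral_add (hmin 0 0) (hmin 0 1)
  rw [h1, h2, h3]
  ring
end

section
/- For three unit vectors in the plane (ℝ²) with pairwise angles ν, ν', ν'' (each in [0,π]) satisfying ν + ν' ≥ π, ν + ν'' ≥ π, ν' + ν'' ≥ π, the three vectors do not all lie in any closed half-plane whose boundary line passes through the origin, except possibly on the boundary; equivalently, 0 is in the convex hull of the three vectors. -/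
/-!
For any orientation of the plane with area form `ω`, every three vectors satisfy
`ω v₂ v₃ • v₁ + ω v₃ v₁ • v₂ + ω v₁ v₂ • v₃ = 0`, so `0` lies in the convex hull as soon as the
three coefficients have a common sign and are not all zero. For unit vectors
`ω y z * ω z x = ⟪z, x⟫ * ⟪z, y⟫ - ⟪x, y⟫`, and the angle conditions, read as `⟪x, y⟫ + ⟪x, z⟫ ≤ 0`
and `⟪x, y⟫ + ⟪y, z⟫ ≤ 0`, make this product nonnegative: among the two roots `c` of the planar
Gram relation `(a * b - c) ^ 2 = (1 - a ^ 2) * (1 - b ^ 2)` for cosines `a`, `b`, `c`, only the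
smaller one is compatible with them. In the degenerate case `ω v₁ v₂ = 0` we have `v₂ = ±v₁`, and
`v₂ = v₁` forces `v₃ = -v₁`; an antipodal pair puts `0` in the hull directly.
-/

open InnerProductGeometry RealInnerProductSpace Module Real

theorem zero_mem_convexHull_of_smul_add_smul_add_smul_eq_zero {E : Type*} [AddCommGroup E]
    [Module ℝ E] {x y z : E} {a b c : ℝ} (ha : 0 ≤ a) (hb : 0 ≤ b) (hc : 0 ≤ c)
    (habc : 0 < a + b + c) (h : a • x + b • y + c • z = 0) :
    (0 : E) ∈ convexHull ℝ {x, y, z} := by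
  have hmem := Finset.centerMass_mem_convexHull Finset.univ (w := ![a, b, c]) (z := ![x, y, z])
    (s := {x, y, z}) (by simp [Fin.forall_fin_succ, ha, hb, hc]) (by simpa [Fin.sum_univ_three])
    (fun i _ => by fin_cases i <;> simp)
  simpa [Finset.centerMass, Fin.sum_univ_three, h] using hmem

theorem le_mul_of_add_nonpos_of_sq_sub_eq {a b c : ℝ} (ha : -1 ≤ a) (hb : -1 ≤ b)
    (hac : a + c ≤ 0) (hbc : b + c ≤ 0) (h : (a * b - c) ^ 2 = (1 - a ^ 2) * (1 - b ^ 2)) :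
    c ≤ a * b := by
  -- If `s = c - a * b > 0`, then `s ≤ -a (1 + b)` and `s ≤ -b (1 + a)` force `a, b < 0`, while
  -- multiplying them and comparing with `s ^ 2 = (1 - a ^ 2) (1 - b ^ 2)` gives `a + b ≥ 1`.
  nlinarith [mul_nonneg (neg_le_iff_add_nonneg'.mp ha) (neg_le_iff_add_nonneg'.mp hb)]

theorem real_inner_add_real_inner_nonpos_of_pi_le_angle_add_angle {E : Type*}
    [NormedAddCommGroup E] [InnerProductSpace ℝ E] {x y z w : E} (hx : ‖x‖ = 1) (hy : ‖y‖ = 1)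
    (hz : ‖z‖ = 1) (hw : ‖w‖ = 1) (h : π ≤ angle x y + angle z w) : ⟪x, y⟫ + ⟪z, w⟫ ≤ 0 := by
  have hcos : Real.cos (angle z w) ≤ Real.cos (π - angle x y) :=
    Real.cos_le_cos_of_nonneg_of_le_pi (by linarith [angle_le_pi x y]) (angle_le_pi z w)
      (by linarith)
  rw [Real.cos_pi_sub] at hcos
  rw [← cos_angle_mul_norm_mul_norm x y, ← cos_angle_mul_norm_mul_norm z w, hx, hy, hz, hw]
  linarith

namespace Orientation

variable {E : Type*} [NormedAddCommGroup E] [InnerProductSpace ℝ E] [Fact (finrank ℝ E = 2)]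
  (o : Orientation ℝ E (Fin 2))

local notation "ω" => o.areaForm

theorem areaForm_smul_add_areaForm_smul_add_areaForm_smul (x y z : E) :
    ω y z • x + ω z x • y + ω x y • z = 0 := by
  set v := ω y z • x + ω z x • y + ω x y • z
  have hinner : ⟪x, v⟫ = 0 := by
    have := o.inner_mul_areaForm_sub x y z
    simp only [v, inner_add_right, inner_smul_right, real_inner_self_eq_norm_sq]
    rw [o.areaForm_swap z x]
    linarith
  have harea : ω x v = 0 := by
    simp only [v, map_add, map_smul, smul_eq_mul, o.areaForm_apply_self]
    rw [o.areaForm_swap x z]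
    ring
  have hkahler : o.kahler x v = 0 := by simp [kahler_apply_apply, hinner, harea]
  rcases (o.kahler_eq_zero_iff x v).mp hkahler with rfl | hv
  · simp [v]
  · exact hv

theorem areaForm_mul_areaForm_nonneg {x y z : E} (hx : ‖x‖ = 1) (hy : ‖y‖ = 1) (hz : ‖z‖ = 1)
    (hxz : ⟪x, y⟫ + ⟪x, z⟫ ≤ 0) (hyz : ⟪x, y⟫ + ⟪y, z⟫ ≤ 0) : 0 ≤ ω y z * ω z x := by
  have hprod : ω y z * ω z x = ⟪z, x⟫ * ⟪z, y⟫ - ⟪x, y⟫ := by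
    have := o.inner_mul_inner_add_areaForm_mul_areaForm z x y
    rw [hz, one_pow, one_mul] at this
    rw [o.areaForm_swap y z]
    linarith
  have hsq : ∀ u : E, ‖u‖ = 1 → ω z u ^ 2 = 1 - ⟪z, u⟫ ^ 2 := fun u hu => by
    have := o.inner_sq_add_areaForm_sq z u
    rw [hz, hu] at this
    linarith
  have hgram : (⟪z, x⟫ * ⟪z, y⟫ - ⟪x, y⟫) ^ 2 = (1 - ⟪z, x⟫ ^ 2) * (1 - ⟪z, y⟫ ^ 2) := by
    rw [← hprod, ← hsq x hx, ← hsq y hy, o.areaForm_swap y z]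
    ring
  rw [hprod, sub_nonneg]
  refine le_mul_of_add_nonpos_of_sq_sub_eq ?_ ?_ ?_ ?_ hgram
  · exact neg_one_le_real_inner_of_norm_eq_one hz hx
  · exact neg_one_le_real_inner_of_norm_eq_one hz hy
  · rw [real_inner_comm]; linarith
  · rw [real_inner_comm]; linarith

theorem zero_mem_convexHull_of_areaForm_nonneg {x y z : E} (hxy : 0 < ω x y) (hyz : 0 ≤ ω y z)
    (hzx : 0 ≤ ω z x) : (0 : E) ∈ convexHull ℝ {x, y, z} :=
  zero_mem_convexHull_of_smul_add_smul_add_smul_eq_zero hyz hzx hxy.le (by linarith)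
    (o.areaForm_smul_add_areaForm_smul_add_areaForm_smul x y z)

theorem zero_mem_convexHull_of_areaForm_mul_nonneg {x y z : E} (hxy : ω x y ≠ 0)
    (hyz : 0 ≤ ω x y * ω y z) (hzx : 0 ≤ ω x y * ω z x) : (0 : E) ∈ convexHull ℝ {x, y, z} := by
  rcases hxy.lt_or_gt with hneg | hpos
  · refine (-o).zero_mem_convexHull_of_areaForm_nonneg ?_ ?_ ?_ <;>
      simp only [areaForm_neg_orientation, LinearMap.neg_apply]
    · linarith
    · nlinarith
    · nlinarith
  · exact o.zero_mem_convexHull_of_areaForm_nonneg hpos (by nlinarith) (by nlinarith)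

end Orientation

/-- Three unit vectors in the plane whose pairwise angles
ν, ν', ν'' satisfy ν+ν' ≥ π, ν+ν'' ≥ π, ν'+ν'' ≥ π have the origin in their
convex hull. -/
theorem zero_mem_convexHull_of_angle_sums
    (v₁ v₂ v₃ : EuclideanSpace ℝ (Fin 2))
    (h₁ : ‖v₁‖ = 1) (h₂ : ‖v₂‖ = 1) (h₃ : ‖v₃‖ = 1)
    (h12 : InnerProductGeometry.angle v₁ v₂ + InnerProductGeometry.angle v₁ v₃ ≥ Real.pi)
    (h13 : InnerProductGeometry.angle v₁ v₂ + InnerProductGeometry.angle v₂ v₃ ≥ Real.pi)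
    (h23 : InnerProductGeometry.angle v₁ v₃ + InnerProductGeometry.angle v₂ v₃ ≥ Real.pi) :
    (0 : EuclideanSpace ℝ (Fin 2)) ∈ convexHull ℝ {v₁, v₂, v₃} := by
  have k₁₂ := real_inner_add_real_inner_nonpos_of_pi_le_angle_add_angle h₁ h₂ h₁ h₃ h12
  have k₁₃ := real_inner_add_real_inner_nonpos_of_pi_le_angle_add_angle h₁ h₂ h₂ h₃ h13
  have k₂₃ := real_inner_add_real_inner_nonpos_of_pi_le_angle_add_angle h₁ h₃ h₂ h₃ h23
  rcases eq_or_ne ⟪v₁, v₂⟫ (-1) with h | hne₁₂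
  · exact zero_mem_convexHull_of_smul_add_smul_add_smul_eq_zero (c := 0) zero_le_one zero_le_one
      le_rfl (by norm_num) (by simp [(inner_eq_neg_one_iff_of_norm_eq_one h₁ h₂).mp h])
  rcases eq_or_ne ⟪v₁, v₃⟫ (-1) with h | hne₁₃
  · exact zero_mem_convexHull_of_smul_add_smul_add_smul_eq_zero (b := 0) zero_le_one le_rfl
      zero_le_one (by norm_num) (by simp [(inner_eq_neg_one_iff_of_norm_eq_one h₁ h₃).mp h])
  have : Fact (finrank ℝ (EuclideanSpace ℝ (Fin 2)) = 2) := ⟨finrank_euclideanSpace_fin⟩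
  let o := (EuclideanSpace.basisFun (Fin 2) ℝ).toBasis.orientation
  have hω : o.areaForm v₁ v₂ ≠ 0 := by
    intro h
    have hsq := o.inner_sq_add_areaForm_sq v₁ v₂
    rw [h, h₁, h₂] at hsq
    have hgt₁₂ := (neg_one_le_real_inner_of_norm_eq_one h₁ h₂).lt_of_ne' hne₁₂
    have hgt₁₃ := (neg_one_le_real_inner_of_norm_eq_one h₁ h₃).lt_of_ne' hne₁₃
    nlinarith
  have c₁₂ := real_inner_comm v₁ v₂
  have c₁₃ := real_inner_comm v₁ v₃
  have c₂₃ := real_inner_comm v₂ v₃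
  refine o.zero_mem_convexHull_of_areaForm_mul_nonneg hω
    (o.areaForm_mul_areaForm_nonneg h₃ h₁ h₂ (by linarith) (by linarith)) ?_
  rw [mul_comm]
  exact o.areaForm_mul_areaForm_nonneg h₂ h₃ h₁ (by linarith) (by linarith)
end
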